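/- Let V be a nonempty finite index set, W_0 an n×n real symmetric positive definite matrix, and for each ω ∈ V let W_ω be an n×n real symmetric positive semidefinite matrix; set W̄_S := W_0 + ∑_{ω ∈ S} W_ω. Then for all Ω, S ⊆ V and every j ∈ S \ Ω: tr(W̄_{(S \ {j}) ∪ Ω}^{−1}) − tr(W̄_{S ∪ Ω}^{−1}) ≥ tr(W_j) / λ_1(W̄_V)² ≥ (min_{ω ∈ V} tr(W_ω)) / λ_1(W̄_V)². -/

import Mathlib

/-!
Write `A = W̄_{(S ∖ {j}) ∪ Ω}` and `B = A + W_j = W̄_{S ∪ Ω}`. Since `A⁻¹ - B⁻¹` equals both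
`A⁻¹ W_j B⁻¹` and `B⁻¹ W_j A⁻¹`, one gets `A⁻¹ - B⁻¹ - B⁻¹ W_j B⁻¹ = (W_j B⁻¹)ᴴ A⁻¹ (W_j B⁻¹) ≥ 0`
in the Loewner order. As `B ≤ W̄_V ≤ λ₁(W̄_V) • 1`, the spectrum of `B` lies in `(0, λ₁(W̄_V)]`, so
the functional calculus gives `B⁻² ≥ λ₁(W̄_V)⁻² • 1`. Pairing with `W_j ≥ 0` under the trace,
`tr(A⁻¹) - tr(B⁻¹) ≥ tr(B⁻² W_j) ≥ tr(W_j) / λ₁(W̄_V)²`.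
-/

open Classical in
/-- Smallest eigenvalue of a real symmetric matrix (junk value `0` if not symmetric). -/
noncomputable def lambdaMin {n : ℕ} (M : Matrix (Fin n) (Fin n) ℝ) : ℝ :=
  if h : M.IsHermitian then ⨅ i, h.eigenvalues i else 0

open Classical in
/-- Largest eigenvalue of a real symmetric matrix (junk value `0` if not symmetric). -/
noncomputable def lambdaMax {n : ℕ} (M : Matrix (Fin n) (Fin n) ℝ) : ℝ :=
  if h : M.IsHermitian then ⨆ i, h.eigenvalues i else 0

open Matrix

open scoped MatrixOrder ComplexOrder

namespace Matrix

variable {n 𝕜 : Type*} [Fintype n] [DecidableEq n] [RCLike 𝕜]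

lemma trace_mul_nonneg {P Q : Matrix n n 𝕜} (hP : 0 ≤ P) (hQ : 0 ≤ Q) : 0 ≤ (P * Q).trace := by
  have hconj := conjugate_nonneg_of_nonneg hP (CFC.sqrt_nonneg Q)
  calc (0 : 𝕜) ≤ (CFC.sqrt Q * P * CFC.sqrt Q).trace :=
        (nonneg_iff_posSemidef.mp hconj).trace_nonneg
    _ = (P * Q).trace := by
      rw [trace_mul_cycle, CFC.sqrt_mul_sqrt_self Q hQ, trace_mul_comm]

lemma trace_mul_le_trace_mul {X Y P : Matrix n n 𝕜} (hXY : X ≤ Y) (hP : 0 ≤ P) :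
    (X * P).trace ≤ (Y * P).trace := by
  simpa [sub_mul, trace_sub] using trace_mul_nonneg (sub_nonneg.mpr hXY) hP

lemma PosDef.inv_mul_mul_inv_le_inv_sub_inv {A P : Matrix n n 𝕜} (hA : A.PosDef) (hP : 0 ≤ P) :
    (A + P)⁻¹ * P * (A + P)⁻¹ ≤ A⁻¹ - (A + P)⁻¹ := by
  set B := A + P
  have hB : B.PosDef := hA.add_posSemidef (nonneg_iff_posSemidef.mp hP)
  have hunit : IsUnit A ↔ IsUnit B := iff_of_true hA.isUnit hB.isUnit
  have hAB : A⁻¹ - B⁻¹ = A⁻¹ * P * B⁻¹ := by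
    rw [inv_sub_inv hunit, add_sub_cancel_left]
  have hBA : A⁻¹ - B⁻¹ = B⁻¹ * P * A⁻¹ := by
    rw [← neg_sub, inv_sub_inv hunit.symm, sub_add_cancel_left]
    noncomm_ring
  have hstar : star (P * B⁻¹) = B⁻¹ * P := by
    rw [star_mul, hB.inv.isHermitian.star_eq, (IsSelfAdjoint.of_nonneg hP).star_eq]
  rw [← sub_nonneg]
  calc (0 : Matrix n n 𝕜) ≤ star (P * B⁻¹) * A⁻¹ * (P * B⁻¹) :=
        star_left_conjugate_nonneg (nonneg_iff_posSemidef.mpr hA.inv.posSemidef) _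
    _ = (A⁻¹ - B⁻¹) * (P * B⁻¹) := by rw [hstar, hBA]
    _ = A⁻¹ - B⁻¹ - B⁻¹ * P * B⁻¹ := by rw [sub_mul, hAB]; noncomm_ring

lemma PosDef.smul_one_le_inv_mul_inv {B : Matrix n n 𝕜} (hB : B.PosDef) {L : ℝ}
    (hBL : B ≤ L • 1) : (L ^ 2)⁻¹ • 1 ≤ B⁻¹ * B⁻¹ := by
  have hfin : (spectrum ℝ B).Finite := finite_real_spectrum
  have hinv : B⁻¹ = cfc (fun x : ℝ => x⁻¹) B :=
    (nonsing_inv_eq_ringInverse B).trans (cfc_ringInverse_id B hB.isUnit hB.isHermitian).symm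
  have hspec : ∀ x ∈ spectrum ℝ B, 0 < x ∧ x ≤ L := by
    rw [← Algebra.algebraMap_eq_smul_one, le_algebraMap_iff_spectrum_le hB.isHermitian] at hBL
    exact fun x hx => ⟨hB.isStrictlyPositive.spectrum_pos hx, hBL x hx⟩
  rw [hinv, ← cfc_mul _ _ B (hfin.continuousOn _) (hfin.continuousOn _),
    ← Algebra.algebraMap_eq_smul_one, algebraMap_le_cfc_iff _ _ B (hfin.continuousOn _)]
  intro x hx
  obtain ⟨hx0, hxL⟩ := hspec x hx
  rw [← mul_inv, ← sq]
  exact inv_anti₀ (by positivity) (pow_le_pow_left₀ hx0.le hxL 2)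

lemma PosDef.trace_div_sq_le_trace_inv_sub_inv {A P : Matrix n n ℝ} (hA : A.PosDef)
    (hP : 0 ≤ P) {L : ℝ} (hL : A + P ≤ L • 1) :
    P.trace / L ^ 2 ≤ A⁻¹.trace - (A + P)⁻¹.trace := by
  have hB : (A + P).PosDef := hA.add_posSemidef (nonneg_iff_posSemidef.mp hP)
  calc P.trace / L ^ 2 = ((L ^ 2)⁻¹ • 1 * P).trace := by
        rw [smul_one_mul, trace_smul, smul_eq_mul, div_eq_inv_mul]
    _ ≤ ((A + P)⁻¹ * (A + P)⁻¹ * P).trace :=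
        trace_mul_le_trace_mul (hB.smul_one_le_inv_mul_inv hL) hP
    _ = ((A + P)⁻¹ * P * (A + P)⁻¹).trace := (trace_mul_cycle _ P _).symm
    _ ≤ (A⁻¹ - (A + P)⁻¹).trace :=
        (tracePositiveLinearMap n ℝ ℝ).monotone' (hA.inv_mul_mul_inv_le_inv_sub_inv hP)
    _ = A⁻¹.trace - (A + P)⁻¹.trace := trace_sub _ _

end Matrix

lemma le_lambdaMax_smul_one {n : ℕ} {M : Matrix (Fin n) (Fin n) ℝ} (hM : M.IsHermitian) :
    M ≤ lambdaMax M • 1 := by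
  rw [← Algebra.algebraMap_eq_smul_one, le_algebraMap_iff_spectrum_le hM,
    hM.spectrum_real_eq_range_eigenvalues]
  rintro _ ⟨i, rfl⟩
  rw [lambdaMax, dif_pos hM]
  exact le_ciSup (Set.finite_range _).bddAbove i

theorem trace_inv_gramian_curvature_numerator_bound_general
    {n : ℕ} {V : Type*} [Fintype V] [DecidableEq V]
    (W₀ : Matrix (Fin n) (Fin n) ℝ) (hW₀ : W₀.PosDef)
    (W : V → Matrix (Fin n) (Fin n) ℝ) (hW : ∀ ω, (W ω).PosSemidef) :
    ∀ Ω S : Finset V, ∀ j ∈ S \ Ω,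
      ((W₀ + ∑ i ∈ (S.erase j) ∪ Ω, W i)⁻¹).trace - ((W₀ + ∑ i ∈ S ∪ Ω, W i)⁻¹).trace ≥
        (W j).trace / (lambdaMax (W₀ + ∑ i ∈ (Finset.univ : Finset V), W i)) ^ 2 ∧
      (W j).trace / (lambdaMax (W₀ + ∑ i ∈ (Finset.univ : Finset V), W i)) ^ 2 ≥
        (⨅ ω : V, (W ω).trace) /
          (lambdaMax (W₀ + ∑ i ∈ (Finset.univ : Finset V), W i)) ^ 2 := by
  intro Ω S j hj
  obtain ⟨hjS, hjΩ⟩ := Finset.mem_sdiff.mp hj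
  have hW' : ∀ ω, 0 ≤ W ω := fun ω => (hW ω).nonneg
  have hWbar : ∀ s : Finset V, (W₀ + ∑ i ∈ s, W i).PosDef := fun s =>
    hW₀.add_posSemidef (nonneg_iff_posSemidef.mp (Finset.sum_nonneg fun i _ => hW' i))
  have hsplit : W₀ + ∑ i ∈ S ∪ Ω, W i = (W₀ + ∑ i ∈ S.erase j ∪ Ω, W i) + W j := by
    have hins : S ∪ Ω = insert j (S.erase j ∪ Ω) := by
      rw [← Finset.insert_union, Finset.insert_erase hjS]
    rw [hins, Finset.sum_insert (by simp [hjΩ]), add_comm (W j), add_assoc]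
  have hle : W₀ + ∑ i ∈ S ∪ Ω, W i ≤
      lambdaMax (W₀ + ∑ i ∈ (Finset.univ : Finset V), W i) • 1 :=
    (add_le_add_right (Finset.sum_le_sum_of_subset_of_nonneg (Finset.subset_univ _)
      fun i _ _ => hW' i) W₀).trans (le_lambdaMax_smul_one (hWbar _).isHermitian)
  refine ⟨?_, div_le_div_of_nonneg_right (ciInf_le (Set.finite_range _).bddBelow j) (sq_nonneg _)⟩
  rw [hsplit] at hle ⊢
  exact (hWbar _).trace_div_sq_le_trace_inv_sub_inv (hW' j) hle

/-- Removing `j ∈ S \ Ω` from `S ∪ Ω`: the decrease of `tr(W̄⁻¹)` is at least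
`tr(W_j) / λ_max(W̄_V)² ≥ (min_ω tr(W_ω)) / λ_max(W̄_V)²`, where
`W̄_S = W₀ + ∑_{ω ∈ S} W_ω`. -/
theorem trace_inv_gramian_curvature_numerator_bound
    {n : ℕ} {V : Type*} [Fintype V] [DecidableEq V] [Nonempty V]
    (W₀ : Matrix (Fin n) (Fin n) ℝ) (hW₀ : W₀.PosDef)
    (W : V → Matrix (Fin n) (Fin n) ℝ) (hW : ∀ ω, (W ω).PosSemidef) :
    ∀ Ω S : Finset V, ∀ j ∈ S \ Ω,
      ((W₀ + ∑ i ∈ (S.erase j) ∪ Ω, W i)⁻¹).trace - ((W₀ + ∑ i ∈ S ∪ Ω, W i)⁻¹).trace ≥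
        (W j).trace / (lambdaMax (W₀ + ∑ i ∈ (Finset.univ : Finset V), W i)) ^ 2 ∧
      (W j).trace / (lambdaMax (W₀ + ∑ i ∈ (Finset.univ : Finset V), W i)) ^ 2 ≥
        (⨅ ω : V, (W ω).trace) /
          (lambdaMax (W₀ + ∑ i ∈ (Finset.univ : Finset V), W i)) ^ 2 :=
  trace_inv_gramian_curvature_numerator_bound_general W₀ hW₀ W hW
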